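/- Let w be a word of length n ≥ 2 in which some letter A appears exactly k times, and suppose additionally that w_i = w_{n-i+1} for every index i with w_i = A. Then f(w) ≥ 2k + 2. -/

import Mathlib

namespace WordGrid

variable {α : Type*}

/-- The `i`-th row of the grid `G` contains the word `w` (forwards or backwards). -/
def rowC {n : ℕ} (w : Fin n → α) (G : Fin n → Fin n → α) (i : Fin n) : Prop :=
  (∀ j, G i j = w j) ∨ (∀ j, G i j = w j.rev)

/-- The `i`-th column of the grid `G` contains the word `w` (forwards or backwards). -/
def colC {n : ℕ} (w : Fin n → α) (G : Fin n → Fin n → α) (i : Fin n) : Prop :=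
  (∀ j, G j i = w j) ∨ (∀ j, G j i = w j.rev)

/-- The main diagonal of the grid `G` contains the word `w`. -/
def diagC {n : ℕ} (w : Fin n → α) (G : Fin n → Fin n → α) : Prop :=
  (∀ j, G j j = w j) ∨ (∀ j, G j j = w j.rev)

/-- The anti-diagonal of the grid `G` contains the word `w`. -/
def adiagC {n : ℕ} (w : Fin n → α) (G : Fin n → Fin n → α) : Prop :=
  (∀ j, G j j.rev = w j) ∨ (∀ j, G j j.rev = w j.rev)

open Classical in
/-- `f(w,G)`: the number of rows, columns and diagonals of `G` containing `w`. -/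
noncomputable def count {n : ℕ} (w : Fin n → α) (G : Fin n → Fin n → α) : ℕ :=
  {i | rowC w G i}.ncard + {i | colC w G i}.ncard
    + (if diagC w G then 1 else 0) + (if adiagC w G then 1 else 0)

/-- `f(w)`: the maximum of `f(w,G)` over all `n`-grids `G`. -/
noncomputable def fword {n : ℕ} (w : Fin n → α) : ℕ :=
  sSup {m | ∃ G : Fin n → Fin n → α, count w G = m}

/-!
Put the word `w` in row `i` when `w i = A`, and fill every other row `i` with the constant
letter `w i`. Each such row of `A`s contains `w`, and so does each column `j` with `w j = A`,
since a row is constant whenever it does not read `w`. The main diagonal reads `w` as well, and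
the symmetry condition on the positions of `A` is exactly what makes the anti-diagonal read `w`.
-/

section Bounds

variable {n : ℕ} (w : Fin n → α)

theorem count_le (G : Fin n → Fin n → α) : count w G ≤ 2 * n + 2 := by
  classical
  have hrow := Set.ncard_le_card {i | rowC w G i}
  have hcol := Set.ncard_le_card {i | colC w G i}
  rw [Nat.card_eq_fintype_card, Fintype.card_fin] at hrow hcol
  unfold count
  split_ifs <;> omega

theorem count_le_fword (G : Fin n → Fin n → α) : count w G ≤ fword w :=
  le_csSup ⟨2 * n + 2, by rintro m ⟨G', rfl⟩; exact count_le w G'⟩ ⟨G, rfl⟩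

end Bounds

section LetterGrid

variable {n : ℕ} (w : Fin n → α) (A : α)

open Classical in
noncomputable def letterGrid : Fin n → Fin n → α :=
  fun i j => if w i = A then w j else w i

theorem rowC_letterGrid {i : Fin n} (hi : w i = A) : rowC w (letterGrid w A) i :=
  Or.inl fun j => by simp [letterGrid, hi]

theorem colC_letterGrid {j : Fin n} (hj : w j = A) : colC w (letterGrid w A) j := by
  refine Or.inl fun i => ?_
  by_cases hi : w i = A
  · simp [letterGrid, hi, hj]
  · simp [letterGrid, hi]

theorem diagC_letterGrid : diagC w (letterGrid w A) :=
  Or.inl fun j => by simp [letterGrid]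

theorem adiagC_letterGrid (hsym : ∀ i, w i = A → w i = w i.rev) :
    adiagC w (letterGrid w A) := by
  refine Or.inl fun j => ?_
  by_cases hj : w j = A
  · simp [letterGrid, hj, ← hsym j hj]
  · simp [letterGrid, hj]

theorem two_mul_ncard_add_two_le_count_letterGrid (hsym : ∀ i, w i = A → w i = w i.rev) :
    2 * {i | w i = A}.ncard + 2 ≤ count w (letterGrid w A) := by
  have hrow : {i | w i = A}.ncard ≤ {i | rowC w (letterGrid w A) i}.ncard :=
    Set.ncard_le_ncard (fun _ => rowC_letterGrid w A) (Set.toFinite _)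
  have hcol : {i | w i = A}.ncard ≤ {i | colC w (letterGrid w A) i}.ncard :=
    Set.ncard_le_ncard (fun _ => colC_letterGrid w A) (Set.toFinite _)
  unfold count
  rw [if_pos (diagC_letterGrid w A), if_pos (adiagC_letterGrid w A hsym)]
  omega

end LetterGrid

theorem fword_many_letter_sym_general {n k : ℕ} (w : Fin n → α)
    (A : α) (hA : {i | w i = A}.ncard = k)
    (hsym : ∀ i, w i = A → w i = w i.rev) :
    fword w ≥ 2 * k + 2 :=
  hA ▸ (two_mul_ncard_add_two_le_count_letterGrid w A hsym).trans (count_le_fword w _)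

theorem fword_many_letter_sym {n k : ℕ} (hn : 2 ≤ n) (w : Fin n → α)
    (A : α) (hA : {i | w i = A}.ncard = k)
    (hsym : ∀ i, w i = A → w i = w i.rev) :
    fword w ≥ 2 * k + 2 :=
  fword_many_letter_sym_general w A hA hsym

end WordGrid
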